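/- Let k be a nonnegative integer and ℓ an even nonnegative integer with p := k + ℓ − 1 ≥ 1. Suppose (U, V) solves the self-similar system (S) on (−1,1), J ⊆ (−1,1) is an open subinterval on which U(y) ≠ 0 and V(y) ≠ 0, and θ : J → ℝ is a continuous function such that conj(U(y))·V(y) = |U(y)|·|V(y)|·exp(i·θ(y)) for all y ∈ J. Then θ is nondecreasing on J. -/

import Mathlib

open Set Complex Filter Topology

/-- `R(y) = U(y) conj(V(y)) + conj(U(y)) V(y)` (a real number, viewed in `ℂ`). -/
noncomputable def Rfun (U V : ℝ → ℂ) (y : ℝ) : ℂ :=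
  U y * (starRingEnd ℂ) (V y) + (starRingEnd ℂ) (U y) * V y

/-- `F(y) = ℓ (|U|² + |V|²)^k R^{ℓ-1}` (equal to `0` when `ℓ = 0`). -/
noncomputable def Ffun (k l : ℕ) (U V : ℝ → ℂ) (y : ℝ) : ℂ :=
  (l : ℂ) * ((‖U y‖ ^ 2 + ‖V y‖ ^ 2 : ℝ) : ℂ) ^ k *
    (Rfun U V y) ^ (l - 1)

/-- `G(y) = k (|U|² + |V|²)^{k-1} R^ℓ` (equal to `0` when `k = 0`). -/
noncomputable def Gfun (k l : ℕ) (U V : ℝ → ℂ) (y : ℝ) : ℂ :=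
  (k : ℂ) * ((‖U y‖ ^ 2 + ‖V y‖ ^ 2 : ℝ) : ℂ) ^ (k - 1) *
    (Rfun U V y) ^ l

/-- `(U, V)` solves the self-similar system (S) on the open set `J`:
`U, V` are continuously differentiable on `J` and for all `y ∈ J`,
`i[(y+1)U' + U/(2p)] = F V + G U` and `i[(y-1)V' + V/(2p)] = F U + G V`,
where `p = k + ℓ - 1`. -/
def SolvesS (k l : ℕ) (U V : ℝ → ℂ) (J : Set ℝ) : Prop :=
  ContDiffOn ℝ 1 U J ∧ ContDiffOn ℝ 1 V J ∧
  ∀ y ∈ J,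
    Complex.I * ((↑y + 1) * deriv U y + (1 / (2 * ((k + l - 1 : ℕ) : ℂ))) * U y)
      = Ffun k l U V y * V y + Gfun k l U V y * U y ∧
    Complex.I * ((↑y - 1) * deriv V y + (1 / (2 * ((k + l - 1 : ℕ) : ℂ))) * V y)
      = Ffun k l U V y * U y + Gfun k l U V y * V y

/-!
Put `W = conj U * V`. Where `W ≠ 0`, a continuous `θ` with `W = |W| e^{iθ}` is locally a branch
of `arg W`, so `θ' = Im (W'/W) = Im (conj (U'/U)) + Im (V'/V)`. Solving (S) for `U'/U` and `V'/V`,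
whose coefficients `F`, `G`, `1/(2p)` are real, gives
`θ' = (F Re (V/U) + G)/(y + 1) - (F Re (U/V) + G)/(y - 1)`.
For even `ℓ` both `G` and `F Re W = (ℓ/2) (|U|² + |V|²)^k R^ℓ` are nonnegative,
and `y + 1 > 0 > y - 1`.
-/

open ComplexConjugate

theorem eventuallyEq_of_exp_mul_I_eq {X : Type*} [TopologicalSpace X] {f g : X → ℝ} {x : X}
    (hf : ContinuousAt f x) (hg : ContinuousAt g x) (hx : f x = g x)
    (h : ∀ᶠ y in 𝓝 x, exp (I * f y) = exp (I * g y)) : f =ᶠ[𝓝 x] g := by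
  have hsmall : ∀ᶠ y in 𝓝 x, |f y - g y| < 2 * Real.pi := by
    have : ContinuousAt (fun y => f y - g y) x := hf.sub hg
    exact this.eventually (Metric.ball_mem_nhds _ Real.two_pi_pos) |>.mono fun y hy => by
      simpa [Real.dist_eq, hx] using hy
  filter_upwards [h, hsmall] with y hy hlt
  obtain ⟨n, hn⟩ := exp_eq_exp_iff_exists_int.1 hy
  have hdiff : f y - g y = n * (2 * Real.pi) := by
    rw [sub_eq_iff_eq_add']
    simpa using congrArg im hn
  have hn0 : n = 0 := by
    rw [hdiff, abs_mul, abs_of_pos Real.two_pi_pos] at hlt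
    have : ((|n| : ℤ) : ℝ) < 1 := by push_cast; nlinarith [Real.two_pi_pos]
    exact Int.abs_lt_one_iff.1 (by exact_mod_cast this)
  simpa [hn0, sub_eq_zero] using hdiff

theorem hasDerivAt_of_eq_norm_mul_exp_mul_I {W : ℝ → ℂ} {θ : ℝ → ℝ} {w : ℂ} {x : ℝ}
    (hW : HasDerivAt W w x) (hx : W x ≠ 0) (hθ : ContinuousAt θ x)
    (hpolar : ∀ᶠ y in 𝓝 x, W y = ‖W y‖ * exp (I * θ y)) :
    HasDerivAt θ (w / W x).im x := by
  -- a local continuous branch of the argument of `W`, normalised to agree with `θ` at `x`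
  set φ : ℝ → ℝ := fun y => θ x + (log (W y / W x)).im
  have hq : HasDerivAt (fun y => log (W y / W x)) (w / W x) x := by
    simpa [div_self hx] using (hW.div_const (W x)).clog_real (by simp [div_self hx])
  have hφ : HasDerivAt φ (w / W x).im x :=
    (imCLM.hasFDerivAt.comp_hasDerivAt x hq).const_add (θ x)
  refine hφ.congr_of_eventuallyEq (eventuallyEq_of_exp_mul_I_eq hθ hφ.continuousAt
    (by simp [φ, div_self hx]) ?_)
  filter_upwards [hpolar, hW.continuousAt.eventually_ne hx] with y hy hy0
  have hWx := hpolar.self_of_nhds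
  set q := W y / W x
  have hexp : exp (I * φ y) = exp (I * θ x) * exp (q.arg * I) := by
    rw [← exp_add]; simp only [φ, q, log_im]; push_cast; ring_nf
  have hnorm : ((‖W y‖ : ℝ) : ℂ) ≠ 0 := by simpa using hy0
  apply mul_left_cancel₀ hnorm
  calc (‖W y‖ : ℂ) * exp (I * θ y) = W y := hy.symm
    _ = (‖q‖ * exp (q.arg * I)) * (‖W x‖ * exp (I * θ x)) := by
      rw [norm_mul_exp_arg_mul_I, ← hWx, div_mul_cancel₀ _ hx]
    _ = ‖W y‖ * exp (I * φ y) := by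
      have : (‖W x‖ : ℂ) ≠ 0 := by simpa using hx
      rw [hexp, norm_div]; push_cast; field_simp

theorem im_div_eq_of_I_mul_eq {s c F G : ℝ} {u v du : ℂ} (hs : s ≠ 0) (hu : u ≠ 0)
    (h : I * (s * du + c * u) = F * v + G * u) :
    (du / u).im = -(F * (v / u).re + G) / s := by
  have hdu : du / u = (-I * (F * (v / u) + G) - c) / s := by
    have : (s : ℂ) ≠ 0 := by exact_mod_cast hs
    field_simp
    linear_combination (-I) * h + (s * du + c * u) * I_mul_I
  rw [hdu, div_ofReal_im]
  simp

theorem re_div_eq_re_conj_mul_div_normSq {u v : ℂ} : (v / u).re = (conj u * v).re / normSq u := by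
  rcases eq_or_ne u 0 with rfl | hu
  · simp
  have : v / u = conj u * v / (normSq u : ℂ) := by
    have : conj u ≠ 0 := by simpa using hu
    rw [normSq_eq_conj_mul_self]; field_simp
  rw [this, div_ofReal_re]

theorem im_conj_mul_deriv_div_nonneg {s t c F G : ℝ} {u v du dv : ℂ} (hs : 0 < s) (ht : t < 0)
    (hu : u ≠ 0) (hv : v ≠ 0)
    (hdu : I * (s * du + c * u) = F * v + G * u) (hdv : I * (t * dv + c * v) = F * u + G * v)
    (hF : 0 ≤ F * (conj u * v).re) (hG : 0 ≤ G) :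
    0 ≤ ((conj du * v + conj u * dv) / (conj u * v)).im := by
  have hsplit : (conj du * v + conj u * dv) / (conj u * v) = conj (du / u) + dv / v := by
    have : conj u ≠ 0 := by simpa using hu
    rw [map_div₀]; field_simp
  have hFu : 0 ≤ F * (v / u).re := by
    rw [re_div_eq_re_conj_mul_div_normSq, ← mul_div_assoc]; exact div_nonneg hF (normSq_nonneg _)
  have hFv : 0 ≤ F * (u / v).re := by
    rw [re_div_eq_re_conj_mul_div_normSq, ← mul_div_assoc, ← conj_re, map_mul, conj_conj,
      mul_comm v]
    exact div_nonneg hF (normSq_nonneg _)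
  rw [hsplit, add_im, conj_im, im_div_eq_of_I_mul_eq hs.ne' hu hdu,
    im_div_eq_of_I_mul_eq ht.ne hv hdv, neg_div, neg_div, neg_neg]
  have h1 : 0 ≤ (F * (v / u).re + G) / s := by positivity
  have h2 : (F * (u / v).re + G) / t ≤ 0 := div_nonpos_of_nonneg_of_nonpos (by positivity) ht.le
  linarith

theorem natCast_mul_pow_pred_mul_self_nonneg {l : ℕ} (hl : Even l) (x : ℝ) :
    0 ≤ l * x ^ (l - 1) * x := by
  rcases eq_or_ne l 0 with rfl | hl0
  · simp
  rw [mul_assoc, pow_sub_one_mul hl0]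
  exact mul_nonneg l.cast_nonneg (hl.pow_nonneg x)

noncomputable def phaseDeriv (U V : ℝ → ℂ) (y : ℝ) : ℝ :=
  ((conj (deriv U y) * V y + conj (U y) * deriv V y) / (conj (U y) * V y)).im

section System

variable {k l : ℕ} {U V : ℝ → ℂ} {y : ℝ}

theorem Rfun_eq_ofReal : Rfun U V y = ((2 * (conj (U y) * V y).re : ℝ) : ℂ) := by
  have : U y * conj (V y) = conj (conj (U y) * V y) := by simp
  rw [Rfun, this, add_comm, add_conj]

theorem Ffun_eq_ofReal :
    Ffun k l U V y =
      ((l * (‖U y‖ ^ 2 + ‖V y‖ ^ 2) ^ k *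
        (2 * (conj (U y) * V y).re) ^ (l - 1) : ℝ) : ℂ) := by
  rw [Ffun, Rfun_eq_ofReal]; push_cast; ring

theorem Gfun_eq_ofReal :
    Gfun k l U V y =
      ((k * (‖U y‖ ^ 2 + ‖V y‖ ^ 2) ^ (k - 1) *
        (2 * (conj (U y) * V y).re) ^ l : ℝ) : ℂ) := by
  rw [Gfun, Rfun_eq_ofReal]; push_cast; ring

theorem SolvesS.phaseDeriv_nonneg (hl : Even l) (hS : SolvesS k l U V (Ioo (-1) 1))
    (hy : y ∈ Ioo (-1) 1) (hU : U y ≠ 0) (hV : V y ≠ 0) : 0 ≤ phaseDeriv U V y := by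
  obtain ⟨hdu, hdv⟩ := hS.2.2 y hy
  rw [Ffun_eq_ofReal, Gfun_eq_ofReal] at hdu hdv
  set x := (conj (U y) * V y).re
  set F : ℝ := l * (‖U y‖ ^ 2 + ‖V y‖ ^ 2) ^ k * (2 * x) ^ (l - 1)
  set G : ℝ := k * (‖U y‖ ^ 2 + ‖V y‖ ^ 2) ^ (k - 1) * (2 * x) ^ l
  have hc : 1 / (2 * ((k + l - 1 : ℕ) : ℂ)) = ((1 / (2 * (k + l - 1 : ℕ)) : ℝ) : ℂ) := by
    push_cast; ring
  refine im_conj_mul_deriv_div_nonneg (s := y + 1) (t := y - 1) (F := F) (G := G)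
    (by linarith [hy.1]) (by linarith [hy.2]) hU hV (by rw [← hc]; push_cast; exact hdu)
    (by rw [← hc]; push_cast; exact hdv) ?_ ?_
  · have hl2x := natCast_mul_pow_pred_mul_self_nonneg hl (2 * x)
    have hnorm : 0 ≤ (‖U y‖ ^ 2 + ‖V y‖ ^ 2) ^ k := by positivity
    nlinarith
  · exact mul_nonneg (by positivity) (hl.pow_nonneg _)

end System

theorem phase_monotone_even_general (k l : ℕ) (hleven : Even l)
    (U V : ℝ → ℂ)
    (hS : SolvesS k l U V (Ioo (-1 : ℝ) 1))
    (a b : ℝ) (hab : Ioo a b ⊆ Ioo (-1 : ℝ) 1)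
    (hU : ∀ y ∈ Ioo a b, U y ≠ 0) (hV : ∀ y ∈ Ioo a b, V y ≠ 0)
    (θ : ℝ → ℝ) (hθc : ContinuousOn θ (Ioo a b))
    (hθ : ∀ y ∈ Ioo a b,
      (starRingEnd ℂ) (U y) * V y
        = ((‖U y‖ * ‖V y‖ : ℝ) : ℂ) * Complex.exp (Complex.I * θ y)) :
    MonotoneOn θ (Ioo a b) := by
  have hderiv : ∀ y ∈ Ioo a b, HasDerivAt θ (phaseDeriv U V y) y := by
    intro y hy
    have hdiff {f : ℝ → ℂ} (hf : ContDiffOn ℝ 1 f (Ioo (-1) 1)) :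
        HasDerivAt f (deriv f y) y :=
      ((hf.differentiableOn one_ne_zero).differentiableAt
        (isOpen_Ioo.mem_nhds (hab hy))).hasDerivAt
    refine hasDerivAt_of_eq_norm_mul_exp_mul_I ((hdiff hS.1).star.mul (hdiff hS.2.1))
      (mul_ne_zero (by simpa using hU y hy) (hV y hy))
      (hθc.continuousAt (isOpen_Ioo.mem_nhds hy)) ?_
    filter_upwards [isOpen_Ioo.mem_nhds hy] with z hz
    simpa [norm_mul] using hθ z hz
  refine monotoneOn_of_hasDerivWithinAt_nonneg (convex_Ioo a b) hθc
    (f' := phaseDeriv U V) ?_ ?_ <;>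
    simp only [interior_Ioo]
  · exact fun y hy => (hderiv y hy).hasDerivWithinAt
  · exact fun y hy => hS.phaseDeriv_nonneg hleven (hab hy) (hU y hy) (hV y hy)

/-- for even `ℓ`, a continuous relative phase `θ` with
`conj(U) V = |U| |V| e^{iθ}` is nondecreasing on any open subinterval of
`(-1,1)` where `U, V` do not vanish. -/
theorem phase_monotone_even (k l : ℕ) (hleven : Even l)
    (hp : 1 ≤ k + l - 1) (U V : ℝ → ℂ)
    (hS : SolvesS k l U V (Ioo (-1 : ℝ) 1))
    (a b : ℝ) (hab : Ioo a b ⊆ Ioo (-1 : ℝ) 1)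
    (hU : ∀ y ∈ Ioo a b, U y ≠ 0) (hV : ∀ y ∈ Ioo a b, V y ≠ 0)
    (θ : ℝ → ℝ) (hθc : ContinuousOn θ (Ioo a b))
    (hθ : ∀ y ∈ Ioo a b,
      (starRingEnd ℂ) (U y) * V y
        = ((‖U y‖ * ‖V y‖ : ℝ) : ℂ) * Complex.exp (Complex.I * θ y)) :
    MonotoneOn θ (Ioo a b) :=
  phase_monotone_even_general k l hleven U V hS a b hab hU hV θ hθc hθ
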